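/- Let f ∈ A(B) be a finite-order smooth function on the jet space B such that D_μ f = 0 for every μ ∈ M. Then f is a constant function. (This is the q = 0 part of the main theorem of the formal calculus of variations: H⁰_H(B) = ℝ.) -/

import Mathlib

/-!
Jet space `B = ℝ^m × (ℝ^m)^I × ℝ^I` for the algebraic (formal) theory of the
Navier–Stokes equations, with `I = ℕ^m` the set of multi-indices.
-/

/-- Multi-indices `I = ℕ^m`. -/
abbrev MIdx (m : ℕ) := Fin m → ℕ

/-- The μ-th unit multi-index `e_μ`. -/
def unitIdx {m : ℕ} (μ : Fin m) : MIdx m := Pi.single μ 1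

/-- The coordinates on the jet space `B`: the independent variables `x^μ`,
the differential variables `u^μ_i` and `p_i`. -/
inductive JetCoord (m : ℕ) where
  | x : Fin m → JetCoord m
  | u : Fin m → MIdx m → JetCoord m
  | p : MIdx m → JetCoord m
deriving DecidableEq

/-- The jet space `B`, viewed as the space of real families indexed by coordinates. -/
abbrev JetB (m : ℕ) := JetCoord m → ℝ

/-- Partial derivative of `f : (C → ℝ) → ℝ` along the coordinate `c`. -/
noncomputable def pd {C : Type*} [DecidableEq C] (c : C) (f : (C → ℝ) → ℝ)
    (z : C → ℝ) : ℝ :=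
  deriv (fun t : ℝ => f (Function.update z c t)) (z c)

/-- A function `f : (C → ℝ) → ℝ` is a finite-order smooth function if it factors
as a smooth function of finitely many of the coordinates. -/
def FinOrd {C : Type*} (f : (C → ℝ) → ℝ) : Prop :=
  ∃ (s : Finset C) (g : ({c // c ∈ s} → ℝ) → ℝ),
    ContDiff ℝ (⊤ : ℕ∞) g ∧ ∀ z : C → ℝ, f z = g fun c => z c.1

/-- The total derivative `D_μ` on the jet space `B`. -/
noncomputable def Dtot {m : ℕ} (μ : Fin m) (f : JetB m → ℝ) : JetB m → ℝ := fun z =>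
  pd (JetCoord.x μ) f z
    + ∑ᶠ (lam : Fin m) (i : MIdx m),
        z (JetCoord.u lam (i + unitIdx μ)) * pd (JetCoord.u lam i) f z
    + ∑ᶠ i : MIdx m, z (JetCoord.p (i + unitIdx μ)) * pd (JetCoord.p i) f z


section Helpers

variable {C : Type*} [DecidableEq C] (f : (C → ℝ) → ℝ) (s : Finset C)
  (g : ({c // c ∈ s} → ℝ) → ℝ) (hg : ContDiff ℝ (⊤ : ℕ∞) g)
  (hfg : ∀ z : C → ℝ, f z = g fun c => z c.1)

include hfg in
theorem L1 (z w : C → ℝ) (h : ∀ c ∈ s, z c = w c) : f z = f w := by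
  rw [hfg, hfg]; congr 1; funext c; exact h c.1 c.2

include hfg in
theorem L2 {c : C} (hc : c ∉ s) (z : C → ℝ) : pd c f z = 0 := by
  have : (fun t : ℝ => f (Function.update z c t)) = fun _ => f z := by
    funext t
    refine L1 f s g hfg _ _ fun c' hc' => ?_
    exact Function.update_of_ne (fun h : c' = c => hc (h ▸ hc')) _ _
  rw [pd, this, deriv_const]

include hg hfg in
theorem L3 (c : C) (z : C → ℝ) :
    Differentiable ℝ (fun t : ℝ => f (Function.update z c t)) := by
  have : (fun t : ℝ => f (Function.update z c t))
      = g ∘ (fun t : ℝ => fun cc : {c // c ∈ s} => Function.update z c t cc.1) := by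
    funext t; exact hfg _
  rw [this]
  refine (hg.differentiable (by simp)).comp (differentiable_pi.2 fun cc => ?_)
  by_cases hc : cc.1 = c
  · simpa [Function.update, hc] using differentiable_id
  · simpa [Function.update, hc] using differentiable_const _

theorem L4 (c : C) (z : C → ℝ) (t : ℝ) :
    deriv (fun t' : ℝ => f (Function.update z c t')) t
      = pd c f (Function.update z c t) := by
  rw [pd]
  simp [Function.update_idem]

include hg hfg in
theorem L5 {c : C} (h : ∀ w, pd c f w = 0) (z : C → ℝ) (t : ℝ) :
    f (Function.update z c t) = f z := by
  have hconst := is_const_of_deriv_eq_zero (f := fun t' : ℝ => f (Function.update z c t'))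
    (L3 f s g hg hfg c z) (fun t' => by rw [L4]; exact h _)
  calc f (Function.update z c t) = f (Function.update z c (z c)) := hconst t (z c)
    _ = f z := by rw [Function.update_eq_self]

include hg hfg in
theorem L6 {c c' : C} (h : ∀ w, pd c' f w = 0) (hne : c ≠ c') (z : C → ℝ) (t : ℝ) :
    pd c f (Function.update z c' t) = pd c f z := by
  rw [pd, pd, Function.update_of_ne hne]
  congr 1
  funext t'
  rw [show Function.update (Function.update z c' t) c t'
      = Function.update (Function.update z c t') c' t from Function.update_comm hne.symm .. ,
    L5 f s g hg hfg h]

end Helpers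

section Jet

variable {m : ℕ}

/-- Auxiliary: extract the multi-index of a coordinate. -/
def idxOf : JetCoord m → MIdx m
  | .x _ => 0
  | .u _ i => i
  | .p i => i

/-- Auxiliary: total degree of a multi-index. -/
def deg (i : MIdx m) : ℕ := ∑ μ, i μ

theorem deg_add_unit (i : MIdx m) (μ : Fin m) : deg (i + unitIdx μ) = deg i + 1 := by
  unfold deg unitIdx
  simp [Pi.add_apply, Finset.sum_add_distrib, Finset.sum_pi_single']

theorem unit_add_inj {j i : MIdx m} {μ : Fin m}
    (h : j + unitIdx μ = i + unitIdx μ) : j = i := by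
  funext k
  have := congrFun h k
  simp only [Pi.add_apply] at this
  omega

theorem Dtot_eq (f : JetB m → ℝ) (s : Finset (JetCoord m)) (T : Finset (MIdx m))
    (hT : ∀ c ∈ s, idxOf c ∈ T)
    (h0 : ∀ c ∉ s, ∀ z, pd c f z = 0)
    (μ : Fin m) (z : JetB m) :
    Dtot μ f z = pd (JetCoord.x μ) f z
      + ∑ lam : Fin m, ∑ j ∈ T,
          z (JetCoord.u lam (j + unitIdx μ)) * pd (JetCoord.u lam j) f z
      + ∑ j ∈ T, z (JetCoord.p (j + unitIdx μ)) * pd (JetCoord.p j) f z := by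
  have hups : ∀ (lam : Fin m) (j : MIdx m), j ∉ T →
      pd (JetCoord.u lam j) f z = 0 := by
    intro lam j hj
    refine h0 _ (fun hs => hj ?_) z
    simpa [idxOf] using hT _ hs
  have hpps : ∀ (j : MIdx m), j ∉ T → pd (JetCoord.p j) f z = 0 := by
    intro j hj
    refine h0 _ (fun hs => hj ?_) z
    simpa [idxOf] using hT _ hs
  rw [Dtot]
  congr 1
  · congr 1
    rw [finsum_eq_sum_of_fintype]
    refine Finset.sum_congr rfl fun lam _ => ?_
    refine finsum_eq_finset_sum_of_support_subset _ fun j hj => ?_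
    by_contra hjT
    exact hj (by simp [hups lam j hjT])
  · refine finsum_eq_finset_sum_of_support_subset _ fun j hj => ?_
    by_contra hjT
    exact hj (by simp [hpps j hjT])

end Jet

/-- if `f ∈ A(B)` satisfies `D_μ f = 0` for every `μ ∈ M`, then `f`
is a constant function (`H⁰_H(B) = ℝ`). -/
theorem statement0 (m : ℕ) (hm : 2 ≤ m) (f : JetB m → ℝ) (hf : FinOrd f)
    (hD : ∀ (μ : Fin m) (z : JetB m), Dtot μ f z = 0) :
    ∃ c : ℝ, ∀ z : JetB m, f z = c := by
  classical
  obtain ⟨s, g, hg, hfg⟩ := hf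
  set T : Finset (MIdx m) := s.image idxOf with hTdef
  have hT : ∀ c ∈ s, idxOf c ∈ T := fun c hc => Finset.mem_image_of_mem _ hc
  have h0 : ∀ c ∉ s, ∀ z, pd c f z = 0 := fun c hc z => L2 f s g hfg hc z
  set n : ℕ := (T.sup deg) + 1 with hn
  have hdegT : ∀ j ∈ T, deg j < n := fun j hj => Nat.lt_succ_of_le (Finset.le_sup hj)
  have μ₀ : Fin m := ⟨0, by omega⟩
  -- main downward induction
  have key : ∀ d : ℕ, ∀ i : MIdx m, n ≤ deg i + d →
      (∀ lam z, pd (JetCoord.u lam i) f z = 0) ∧ (∀ z, pd (JetCoord.p i) f z = 0) := by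
    intro d
    induction d with
    | zero =>
      intro i hi
      constructor
      · intro lam z
        refine h0 _ (fun hs => ?_) z
        have := hdegT _ (by simpa [idxOf] using hT _ hs)
        omega
      · intro z
        refine h0 _ (fun hs => ?_) z
        have := hdegT _ (by simpa [idxOf] using hT _ hs)
        omega
    | succ d ih =>
      intro i hi
      have ihe := ih (i + unitIdx μ₀) (by rw [deg_add_unit]; omega)
      constructor
      · -- the u-case
        intro lam z
        by_cases hiT : i ∈ T
        case neg =>
          refine h0 _ (fun hs => hiT ?_) z
          simpa [idxOf] using hT _ hs
        set c' : JetCoord m := JetCoord.u lam (i + unitIdx μ₀) with hc'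
        have hc'0 : ∀ w, pd c' f w = 0 := fun w => ihe.1 lam w
        set v : ℝ := pd (JetCoord.u lam i) f z with hv
        set z' : JetB m := Function.update z c' (z c' + 1) with hz'
        -- coordinate inequalities
        have hx_ne : JetCoord.x μ₀ ≠ c' := by rw [hc']; exact fun h => nomatch h
        have hui_ne : JetCoord.u lam i ≠ c' := by
          rw [hc']; intro h
          injection h with h1 h2
          have := congrArg deg h2
          rw [deg_add_unit] at this; omega
        -- pd's at z' equal pd's at z
        have hpd : ∀ c : JetCoord m, pd c f z' = pd c f z := by
          intro c
          by_cases hcc : c = c'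
          · rw [hcc, hc'0, hc'0]
          · rw [hz']; exact L6 f s g hg hfg hc'0 hcc z _
        -- evaluate the total-derivative identity at z and z'
        have h1 := hD μ₀ z
        have h2 := hD μ₀ z'
        rw [Dtot_eq f s T hT h0] at h1 h2
        -- the x-term
        have hA : pd (JetCoord.x μ₀) f z' = pd (JetCoord.x μ₀) f z := hpd _
        -- the p-sum
        have hP : (∑ j ∈ T, z' (JetCoord.p (j + unitIdx μ₀)) * pd (JetCoord.p j) f z')
            = ∑ j ∈ T, z (JetCoord.p (j + unitIdx μ₀)) * pd (JetCoord.p j) f z := by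
          refine Finset.sum_congr rfl fun j _ => ?_
          rw [hpd, hz', Function.update_of_ne (by rw [hc']; exact fun h => nomatch h)]
        -- the u-sum
        have hU : (∑ lam' : Fin m, ∑ j ∈ T,
              z' (JetCoord.u lam' (j + unitIdx μ₀)) * pd (JetCoord.u lam' j) f z')
            = (∑ lam' : Fin m, ∑ j ∈ T,
              z (JetCoord.u lam' (j + unitIdx μ₀)) * pd (JetCoord.u lam' j) f z) + v := by
          have hsplit : ∀ lam' : Fin m, ∀ j ∈ T,
              z' (JetCoord.u lam' (j + unitIdx μ₀)) * pd (JetCoord.u lam' j) f z'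
                = z (JetCoord.u lam' (j + unitIdx μ₀)) * pd (JetCoord.u lam' j) f z
                  + (if lam' = lam ∧ j = i then v else 0) := by
            intro lam' j _
            by_cases hji : lam' = lam ∧ j = i
            · obtain ⟨rfl, rfl⟩ := hji
              rw [if_pos ⟨rfl, rfl⟩, hpd, hz', ← hc', Function.update_self, ← hv]
              ring
            · rw [if_neg hji, add_zero, hpd, hz', Function.update_of_ne ?_]
              rw [hc']
              intro h
              injection h with h1 h2
              exact hji ⟨h1, unit_add_inj h2⟩
          calc (∑ lam' : Fin m, ∑ j ∈ T,
                z' (JetCoord.u lam' (j + unitIdx μ₀)) * pd (JetCoord.u lam' j) f z')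
              = ∑ lam' : Fin m, ∑ j ∈ T,
                (z (JetCoord.u lam' (j + unitIdx μ₀)) * pd (JetCoord.u lam' j) f z
                  + (if lam' = lam ∧ j = i then v else 0)) :=
                Finset.sum_congr rfl fun lam' _ =>
                  Finset.sum_congr rfl fun j hj => hsplit lam' j hj
            _ = (∑ lam' : Fin m, ∑ j ∈ T,
                  z (JetCoord.u lam' (j + unitIdx μ₀)) * pd (JetCoord.u lam' j) f z)
                + ∑ lam' : Fin m, ∑ j ∈ T, (if lam' = lam ∧ j = i then v else 0) := by
                rw [← Finset.sum_add_distrib]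
                exact Finset.sum_congr rfl fun lam' _ => Finset.sum_add_distrib
            _ = _ := by
                congr 1
                have hinner : ∀ lam' : Fin m,
                    (∑ j ∈ T, (if lam' = lam ∧ j = i then v else 0))
                      = if lam' = lam then v else 0 := by
                  intro lam'
                  by_cases hl : lam' = lam
                  · subst hl
                    simp [Finset.sum_ite_eq', hiT]
                  · simp [hl]
                rw [Finset.sum_congr rfl fun lam' _ => hinner lam']
                simp [Finset.sum_ite_eq']
        rw [hA, hP, hU] at h2
        rw [hv]; linarith
      · -- the p-case
        intro z
        by_cases hiT : i ∈ T
        case neg =>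
          refine h0 _ (fun hs => hiT ?_) z
          simpa [idxOf] using hT _ hs
        set c' : JetCoord m := JetCoord.p (i + unitIdx μ₀) with hc'
        have hc'0 : ∀ w, pd c' f w = 0 := fun w => ihe.2 w
        set v : ℝ := pd (JetCoord.p i) f z with hv
        set z' : JetB m := Function.update z c' (z c' + 1) with hz'
        have hpd : ∀ c : JetCoord m, pd c f z' = pd c f z := by
          intro c
          by_cases hcc : c = c'
          · rw [hcc, hc'0, hc'0]
          · rw [hz']; exact L6 f s g hg hfg hc'0 hcc z _
        have h1 := hD μ₀ z
        have h2 := hD μ₀ z'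
        rw [Dtot_eq f s T hT h0] at h1 h2
        have hA : pd (JetCoord.x μ₀) f z' = pd (JetCoord.x μ₀) f z := hpd _
        have hU : (∑ lam' : Fin m, ∑ j ∈ T,
              z' (JetCoord.u lam' (j + unitIdx μ₀)) * pd (JetCoord.u lam' j) f z')
            = ∑ lam' : Fin m, ∑ j ∈ T,
              z (JetCoord.u lam' (j + unitIdx μ₀)) * pd (JetCoord.u lam' j) f z := by
          refine Finset.sum_congr rfl fun lam' _ => Finset.sum_congr rfl fun j _ => ?_
          rw [hpd, hz', Function.update_of_ne (by rw [hc']; exact fun h => nomatch h)]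
        have hP : (∑ j ∈ T, z' (JetCoord.p (j + unitIdx μ₀)) * pd (JetCoord.p j) f z')
            = (∑ j ∈ T, z (JetCoord.p (j + unitIdx μ₀)) * pd (JetCoord.p j) f z) + v := by
          have hsplit : ∀ j ∈ T,
              z' (JetCoord.p (j + unitIdx μ₀)) * pd (JetCoord.p j) f z'
                = z (JetCoord.p (j + unitIdx μ₀)) * pd (JetCoord.p j) f z
                  + (if j = i then v else 0) := by
            intro j _
            by_cases hji : j = i
            · subst hji
              rw [if_pos rfl, hpd, hz', ← hc', Function.update_self, ← hv]
              ring
            · rw [if_neg hji, add_zero, hpd, hz', Function.update_of_ne ?_]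
              rw [hc']
              intro h
              injection h with h2
              exact hji (unit_add_inj h2)
          calc (∑ j ∈ T, z' (JetCoord.p (j + unitIdx μ₀)) * pd (JetCoord.p j) f z')
              = ∑ j ∈ T, (z (JetCoord.p (j + unitIdx μ₀)) * pd (JetCoord.p j) f z
                  + (if j = i then v else 0)) :=
                Finset.sum_congr rfl fun j hj => hsplit j hj
            _ = _ := by
                rw [Finset.sum_add_distrib]
                congr 1
                simp [Finset.sum_ite_eq', hiT]
        rw [hA, hU, hP] at h2
        rw [hv]; linarith
  -- all u and p partials vanish
  have hup : ∀ i : MIdx m, (∀ lam z, pd (JetCoord.u lam i) f z = 0)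
      ∧ (∀ z, pd (JetCoord.p i) f z = 0) := fun i => key n i (by omega)
  -- x partials vanish
  have hx : ∀ (μ : Fin m) (z : JetB m), pd (JetCoord.x μ) f z = 0 := by
    intro μ z
    have h1 := hD μ z
    rw [Dtot_eq f s T hT h0] at h1
    have hU : (∑ lam' : Fin m, ∑ j ∈ T,
          z (JetCoord.u lam' (j + unitIdx μ)) * pd (JetCoord.u lam' j) f z) = 0 := by
      refine Finset.sum_eq_zero fun lam' _ => Finset.sum_eq_zero fun j _ => ?_
      rw [(hup j).1 lam' z, mul_zero]
    have hP : (∑ j ∈ T, z (JetCoord.p (j + unitIdx μ)) * pd (JetCoord.p j) f z) = 0 := by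
      refine Finset.sum_eq_zero fun j _ => ?_
      rw [(hup j).2 z, mul_zero]
    rw [hU, hP] at h1
    linarith
  -- hence every partial vanishes
  have hall : ∀ (c : JetCoord m) (z : JetB m), pd c f z = 0 := by
    intro c z
    cases c with
    | x μ => exact hx μ z
    | u lam i => exact (hup i).1 lam z
    | p i => exact (hup i).2 z
  -- f is independent of every coordinate
  have hindep : ∀ (z : JetB m) (c : JetCoord m) (t : ℝ),
      f (Function.update z c t) = f z := fun z c t =>
    L5 f s g hg hfg (fun w => hall c w) z t
  -- finitely many changes do not change f
  have hlist : ∀ l : List (JetCoord m), ∀ z w : JetB m,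
      (∀ c, z c ≠ w c → c ∈ l) → f z = f w := by
    intro l
    induction l with
    | nil =>
      intro z w h
      have : z = w := funext fun c => by_contra fun hc => List.not_mem_nil (h c hc)
      rw [this]
    | cons c l ih =>
      intro z w h
      refine (hindep z c (w c)).symm.trans (ih _ w ?_)
      intro c'' hc''
      by_cases hcc : c'' = c
      · subst hcc
        rw [Function.update_self] at hc''
        exact absurd rfl hc''
      · rw [Function.update_of_ne hcc] at hc''
        rcases List.mem_cons.1 (h c'' hc'') with h' | h'
        · exact absurd h' hcc
        · exact h'
  refine ⟨f (fun _ => 0), fun z => ?_⟩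
  have step1 : f z = f (fun c => if c ∈ s then (0 : ℝ) else z c) := by
    refine hlist s.toList z _ fun c hc => ?_
    by_cases hcs : c ∈ s
    · exact Finset.mem_toList.2 hcs
    · simp [hcs] at hc
  rw [step1]
  exact L1 f s g hfg _ _ fun c hc => by simp [hc]
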